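/- Let p be an odd prime, G a cyclic group of order p^n with fixed generator σ, and H_t the subgroup generated by σ^{p^t}. Fix nonnegative integers m_0,…,m_n and index pairs (t,j) with 0 ≤ t ≤ n, 1 ≤ j ≤ m_t. Let A = ⊕_{(u,k)} ℤ_p[G/H_u]·P_{(u,k)} and B = ⊕_{(t,j)} ℤ_p[G/H_t]·P^t_{(t,j)} be ℤ_p[G]-modules given as direct sums of free rank-one modules on the indicated generators (so P_{(u,k)} is H_u-fixed and P^t_{(t,j)} is H_t-fixed), and let ⟨·,·⟩: A × B → ℂ_p be a ℤ_p-bilinear G-invariant pairing (⟨γa,γb⟩ = ⟨a,b⟩ for γ ∈ G). Define matrices over ℂ_p[G], indexed by the pairs above: R with entries R_{(u,k),(t,j)} := (1/|H_u|) Σ_{τ ∈ G/H_u} ⟨τ·P_{(u,k)}, P^t_{(t,j)}⟩ · τ e_{H_u}; let Φ = (Φ_{(t,j),(s,i)}) be any matrix with entries in ℤ_p[G]; and let Λ have entries Λ_{(u,k),(s,i)} := (1/|H_s|) Σ_{(t,j)} Φ_{(t,j),(s,i)} · ( Σ_{τ ∈ G/H_u} ⟨τ·P_{(u,k)}, P^t_{(t,j)}⟩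 · τ e_{H_u} ) + [(u,k) = (s,i)]·(σ^{p^s} − 1), where e_{H_u} := |H_u|^{−1}Σ_{h∈H_u}h. Then for every character ψ: G → ℂ_p^× (with t_ψ defined by ker(ψ) = H_{t_ψ}) one has det(ψ(Λ)) = det(ψ(R_{t_ψ})) · det(ψ(Φ_{t_ψ})) · ∏_{s=0}^{t_ψ−1} (ψ(σ^{p^s}) − 1)^{m_s}. -/

import Mathlib

/-!
Applying `ψ` sends `e_{H_u}` to `1` if `H_u ⊆ ker ψ` and to `0` otherwise, i.e. according as
`t_ψ ≤ u` or not. So the rows of `ψ(Λ)` with `u < t_ψ` keep only their diagonal entries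
`ψ(σ^{p^u}) - 1`, and `ψ(Λ)` is block triangular. In the rows with `u ≥ t_ψ` the twisted sums
`∑_τ ⟨τ P_{(u,k)}, P^t_{(t,j)}⟩ ψ(τ)` vanish for `t < t_ψ`: translating `τ` by `σ^{p^t}`, which
fixes `P^t_{(t,j)}`, multiplies the sum by `ψ(σ^{p^t}) ≠ 1`. Hence the remaining block is the
product of the restrictions of these sums and of `ψ(Φ)`, up to diagonal factors `|H|⁻¹` that
contribute the same determinant as in `ψ(R_{t_ψ})`.
-/

open scoped Classical

/-- Index pairs `(t, j)` with `0 ≤ t ≤ n` and `1 ≤ j ≤ m t`. -/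
abbrev Idx (n : ℕ) (m : Fin (n + 1) → ℕ) : Type :=
  Σ t : Fin (n + 1), Fin (m t)

/-- The index type for the `ℤ_p`-basis of `⊕_{(t,j)} ℤ_p[G/H_t]·P_{(t,j)}`. -/
abbrev BIdx (p n : ℕ) (m : Fin (n + 1) → ℕ) (G : Type) [Group G] (σ : G) : Type :=
  Σ tj : Idx n m, G ⧸ Subgroup.zpowers (σ ^ p ^ (tj.1 : ℕ))

open MonoidAlgebra

theorem sum_eq_zero_of_comp_perm_eq_mul {X R : Type*} [Fintype X] [CommRing R] [IsDomain R]
    (e : Equiv.Perm X) {c : R} (hc : c ≠ 1) (f : X → R) (hf : ∀ x, f (e x) = c * f x) :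
    ∑ x, f x = 0 := by
  have htwist : c * ∑ x, f x = ∑ x, f x := by
    rw [Finset.mul_sum, ← Equiv.sum_comp e f]
    exact Finset.sum_congr rfl fun x _ => (hf x).symm
  by_contra h
  exact hc ((mul_eq_right₀ h).1 htwist)

theorem pow_prime_pow_mem_zpowers_pow_prime_pow_iff {G : Type*} [Group G] {σ : G} {p n t : ℕ}
    (hp : p.Prime) (hσ : orderOf σ = p ^ n) (ht : t ≤ n) (u : ℕ) :
    σ ^ p ^ u ∈ Subgroup.zpowers (σ ^ p ^ t) ↔ t ≤ u := by
  have horder : ∀ v ≤ n, orderOf (σ ^ p ^ v) = p ^ (n - v) := fun v hv => by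
    rw [orderOf_pow_of_dvd (pow_ne_zero _ hp.ne_zero) (hσ ▸ pow_dvd_pow p hv), hσ,
      Nat.pow_div hv hp.pos]
  constructor
  · intro hmem
    by_contra! hut
    have hdvd := orderOf_dvd_of_mem_zpowers hmem
    rw [horder u (by omega), horder t ht, Nat.pow_dvd_pow_iff_le_right hp.one_lt] at hdvd
    omega
  · intro htu
    rw [← Nat.add_sub_cancel' htu, pow_add, pow_mul]
    exact Subgroup.pow_mem _ (Subgroup.mem_zpowers _) _

namespace MonoidAlgebra

theorem lift_lift_of {G R K : Type*} [Monoid G] [CommSemiring R] [Field K] [Algebra R K]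
    (ψ : G →* K) (x : MonoidAlgebra R G) :
    lift K K G ψ (lift R (MonoidAlgebra K G) G (of K G) x) = lift R K G ψ x := by
  have hcomp : ((lift K K G ψ).restrictScalars R).comp (lift R (MonoidAlgebra K G) G (of K G)) =
      lift R K G ψ := by
    rw [lift_unique' (AlgHom.comp _ _)]
    congr 1
    ext g
    simp
  exact congr($hcomp x)

theorem lift_sum_smul_of_mul {G K ι : Type*} [Monoid G] [Field K] (ψ : G →* K) (s : Finset ι)
    (a : ι → K) (g : ι → G) (e : MonoidAlgebra K G) :
    lift K K G ψ (∑ i ∈ s, a i • (of K G (g i) * e)) =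
      (∑ i ∈ s, a i * ψ (g i)) * lift K K G ψ e := by
  simp [Finset.sum_mul, mul_assoc]

theorem lift_sum_lift_of_mul_sum_smul_of_mul {G R K ι κ : Type*} [Monoid G] [CommSemiring R]
    [Field K] [Algebra R K] [Fintype ι] [Fintype κ] (ψ : G →* K) (Φ : ι → MonoidAlgebra R G)
    (a : ι → κ → K) (g : κ → G) (e : MonoidAlgebra K G) :
    lift K K G ψ (∑ i, lift R (MonoidAlgebra K G) G (of K G) (Φ i) *
        ∑ k, a i k • (of K G (g k) * e)) =
      (∑ i, (∑ k, a i k * ψ (g k)) * lift R K G ψ (Φ i)) * lift K K G ψ e := by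
  rw [map_sum, Finset.sum_mul]
  refine Finset.sum_congr rfl fun i _ => ?_
  rw [map_mul, lift_lift_of, lift_sum_smul_of_mul]
  ring

theorem lift_inv_card_smul_sum_of {G K : Type*} [Group G] [Field K] [CharZero K] (ψ : G →* K)
    (H : Subgroup G) [Fintype H] :
    lift K K G ψ ((Fintype.card H : K)⁻¹ • ∑ h : H, of K G h) = if H ≤ ψ.ker then 1 else 0 := by
  rw [map_smul, map_sum]
  simp only [lift_of, smul_eq_mul]
  split_ifs with hH
  · rw [Finset.sum_congr rfl fun h _ => hH h.2, Finset.sum_const, Finset.card_univ,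
      nsmul_eq_mul, mul_one, inv_mul_cancel₀ (Nat.cast_ne_zero.2 Fintype.card_ne_zero)]
  · have hne : ψ.comp H.subtype ≠ 1 := fun h1 =>
      hH fun h hh => congr($h1 ⟨h, hh⟩)
    rw [show ∑ h : H, ψ h = ∑ h : H, ψ.comp H.subtype h from rfl,
      sum_hom_units_eq_zero _ hne, mul_zero]

theorem of_smul_eq_self_of_mem {G R M : Type*} [Group G] [CommSemiring R] [AddCommMonoid M]
    [Module (MonoidAlgebra R G) M] {H : Subgroup G} {x : M} (b : G ⧸ H → M)
    (hb : ∀ g : G, b g = of R G g • x) {h : G} (hh : h ∈ H) : of R G h • x = x := by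
  have hcoset : (h : G ⧸ H) = ((1 : G) : G ⧸ H) := QuotientGroup.eq.2 (by simpa using H.inv_mem hh)
  rw [← hb, hcoset, hb, map_one, one_smul]

end MonoidAlgebra

theorem sum_pair_out_smul_mul_eq_zero {G R K A B : Type*} [CommGroup G] [CommRing R] [Field K]
    [AddCommGroup A] [Module (MonoidAlgebra R G) A] [AddCommGroup B] [Module (MonoidAlgebra R G) B]
    (pair : A → B → K) (hpair : ∀ g a y, pair (of R G g • a) (of R G g • y) = pair a y)
    (ψ : G →* K) {H : Subgroup G} [Fintype (G ⧸ H)] (hH : H ≤ ψ.ker)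
    {x : A} (hx : ∀ h ∈ H, of R G h • x = x) {y : B} {g₀ : G} (hy : of R G g₀ • y = y)
    (hg₀ : ψ g₀ ≠ 1) :
    ∑ c : G ⧸ H, pair (of R G c.out • x) y * ψ c.out = 0 := by
  refine sum_eq_zero_of_comp_perm_eq_mul (MulAction.toPerm g₀) hg₀ _ fun c => ?_
  obtain ⟨w, hw, hout⟩ : ∃ w ∈ H, (MulAction.toPerm g₀ c).out = g₀ * c.out * w := by
    refine ⟨(g₀ * c.out)⁻¹ * (MulAction.toPerm g₀ c).out, QuotientGroup.eq.1 ?_, by group⟩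
    rw [QuotientGroup.out_eq', MulAction.toPerm_apply, ← smul_eq_mul,
      ← MulAction.Quotient.smul_mk, QuotientGroup.out_eq']
  have hpair_twist :
      pair (of R G (MulAction.toPerm g₀ c).out • x) y = pair (of R G c.out • x) y := by
    rw [hout, map_mul, mul_smul, hx w hw, map_mul, mul_smul, ← hpair g₀ (of R G c.out • x) y, hy]
  rw [hpair_twist, hout, map_mul, map_mul, hH hw, mul_one]
  ring

theorem Fintype.prod_subtype_sigma_fin {ι M : Type*} [Fintype ι] [CommMonoid M] (m : ι → ℕ)
    (q : ι → Prop) [DecidablePred q] (f : ι → M) :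
    ∏ x : {x : Σ i, Fin (m i) // q x.1}, f x.1.1 = ∏ i, if q i then f i ^ m i else 1 := by
  rw [← Finset.prod_subtype (Finset.univ.filter fun x : Σ i, Fin (m i) => q x.1) (by simp)
    fun x => f x.1, Finset.prod_filter, ← Finset.univ_sigma_univ, Finset.prod_sigma]
  refine Finset.prod_congr rfl fun i _ => ?_
  split_ifs <;> simp

namespace Matrix

theorem det_of_mul_ite_add_diagonal {ι K : Type*} [Fintype ι] [DecidableEq ι] [Field K]
    (q : ι → Prop) [DecidablePred q] (S F : Matrix ι ι K) (c d : ι → K)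
    (hS : ∀ i k, q i → ¬ q k → S i k = 0) (hd : ∀ i, q i → d i = 0) :
    det (of fun i j => c j * ((S * F) i j * if q i then 1 else 0) + diagonal d i j) =
      det (toSquareBlockProp (diagonal c * S) q) * det (toSquareBlockProp F q) *
        ∏ i : {i // ¬ q i}, d i := by
  set M : Matrix ι ι K := of fun i j => c j * ((S * F) i j * if q i then 1 else 0) + diagonal d i j
  have hlower : ∀ i, ¬ q i → ∀ j, q j → M i j = 0 := fun i hi j hj => by
    simp [M, hi, diagonal_apply_ne d (show i ≠ j by rintro rfl; exact hi hj)]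
  have hSF : toSquareBlockProp (S * F) q = toSquareBlockProp S q * toSquareBlockProp F q := by
    change toBlock (S * F) q q = toBlock S q q * toBlock F q q
    have hS_block : toBlock S q (fun k => ¬ q k) = 0 := ext fun i k => hS i k i.2 k.2
    rw [toBlock_mul_eq_add q q q, hS_block, Matrix.zero_mul, add_zero]
  have htop : toSquareBlockProp M q =
      toSquareBlockProp S q * toSquareBlockProp F q * diagonal fun i : {i // q i} => c i := by
    rw [← hSF]
    ext i j
    simp [M, toSquareBlockProp_def, i.2, diagonal_apply, hd _ i.2, mul_comm]
  have hbottom : toSquareBlockProp M (fun i => ¬ q i) = diagonal fun i : {i // ¬ q i} => d i := by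
    ext i j
    simp [M, toSquareBlockProp_def, i.2, diagonal_apply, Subtype.ext_iff]
  have hrow : toSquareBlockProp (diagonal c * S) q =
      (diagonal fun i : {i // q i} => c i) * toSquareBlockProp S q := by
    ext i j
    simp [toSquareBlockProp_def, diagonal_mul]
  rw [twoBlockTriangular_det M q hlower, htop, hbottom, hrow]
  simp only [det_mul, det_diagonal]
  ring

end Matrix

theorem statement11_general (p : ℕ) [Fact p.Prime] (n : ℕ)
    (G : Type) [CommGroup G] [Fintype G]
    (σ : G) (hσ : ∀ g : G, g ∈ Subgroup.zpowers σ) (hcard : Fintype.card G = p ^ n)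
    (m : Fin (n + 1) → ℕ)
    (K : Type) [Field K] [Algebra ℚ_[p] K] [Algebra ℤ_[p] K]
    (A : Type) [AddCommGroup A] [Module (MonoidAlgebra ℤ_[p] G) A]
    [Module ℤ_[p] A]
    (B : Type) [AddCommGroup B] [Module (MonoidAlgebra ℤ_[p] G) B]
    [Module ℤ_[p] B]
    (P : Idx n m → A)
    (bA : Module.Basis (BIdx p n m G σ) ℤ_[p] A)
    (hbA : ∀ (uk : Idx n m) (g : G),
      bA ⟨uk, QuotientGroup.mk g⟩ = MonoidAlgebra.of ℤ_[p] G g • P uk)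
    (Pt : Idx n m → B)
    (bB : Module.Basis (BIdx p n m G σ) ℤ_[p] B)
    (hbB : ∀ (tj : Idx n m) (g : G),
      bB ⟨tj, QuotientGroup.mk g⟩ = MonoidAlgebra.of ℤ_[p] G g • Pt tj)
    (pair : A → B → K)
    (hpair_inv : ∀ (g : G) (a : A) (y : B),
      pair (MonoidAlgebra.of ℤ_[p] G g • a) (MonoidAlgebra.of ℤ_[p] G g • y) = pair a y)
    (eH : Fin (n + 1) → MonoidAlgebra K G)
    (heH : ∀ u : Fin (n + 1), eH u =
      (Fintype.card ↥(Subgroup.zpowers (σ ^ p ^ (u : ℕ))) : K)⁻¹ •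
        ∑ h : ↥(Subgroup.zpowers (σ ^ p ^ (u : ℕ))), MonoidAlgebra.of K G (h : G))
    (Rmat : Idx n m → Idx n m → MonoidAlgebra K G)
    (hRmat : ∀ uk tj : Idx n m, Rmat uk tj =
      (Fintype.card ↥(Subgroup.zpowers (σ ^ p ^ (uk.1 : ℕ))) : K)⁻¹ •
        ∑ c : G ⧸ Subgroup.zpowers (σ ^ p ^ (uk.1 : ℕ)),
          pair (MonoidAlgebra.of ℤ_[p] G c.out • P uk) (Pt tj) •
            (MonoidAlgebra.of K G c.out * eH uk.1))
    (Φmat : Idx n m → Idx n m → MonoidAlgebra ℤ_[p] G)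
    (Λmat : Idx n m → Idx n m → MonoidAlgebra K G)
    (hΛmat : ∀ uk si : Idx n m, Λmat uk si =
      (Fintype.card ↥(Subgroup.zpowers (σ ^ p ^ (si.1 : ℕ))) : K)⁻¹ •
        (∑ tj : Idx n m,
          MonoidAlgebra.lift ℤ_[p] (MonoidAlgebra K G) G (MonoidAlgebra.of K G) (Φmat tj si) *
            ∑ c : G ⧸ Subgroup.zpowers (σ ^ p ^ (uk.1 : ℕ)),
              pair (MonoidAlgebra.of ℤ_[p] G c.out • P uk) (Pt tj) •
                (MonoidAlgebra.of K G c.out * eH uk.1)) +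
        (if uk = si then MonoidAlgebra.of K G (σ ^ p ^ (si.1 : ℕ)) - 1 else 0))
    (ψ : G →* K) (tψ : ℕ) (htψ : tψ ≤ n)
    (hker : ∀ g : G, ψ g = 1 ↔ g ∈ Subgroup.zpowers (σ ^ p ^ tψ)) :
    Matrix.det (Matrix.of fun uk si : Idx n m =>
        MonoidAlgebra.lift K K G ψ (Λmat uk si)) =
      Matrix.det (Matrix.of fun r c : {x : Idx n m // tψ ≤ (x.1 : ℕ)} =>
          MonoidAlgebra.lift K K G ψ (Rmat r.1 c.1)) *
        Matrix.det (Matrix.of fun r c : {x : Idx n m // tψ ≤ (x.1 : ℕ)} =>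
          MonoidAlgebra.lift ℤ_[p] K G ψ (Φmat r.1 c.1)) *
        ∏ s : Fin (n + 1), if (s : ℕ) < tψ then (ψ (σ ^ p ^ (s : ℕ)) - 1) ^ m s else 1 := by
  have : CharZero K := charZero_of_injective_algebraMap (algebraMap ℚ_[p] K).injective
  have hσ_order : orderOf σ = p ^ n := by
    rw [orderOf_eq_card_of_forall_mem_zpowers hσ, Nat.card_eq_fintype_card, hcard]
  have hψσ (u : ℕ) : ψ (σ ^ p ^ u) = 1 ↔ tψ ≤ u :=
    (hker _).trans (pow_prime_pow_mem_zpowers_pow_prime_pow_iff Fact.out hσ_order htψ u)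
  have hker_le (u : ℕ) : Subgroup.zpowers (σ ^ p ^ u) ≤ ψ.ker ↔ tψ ≤ u :=
    Subgroup.zpowers_le.trans (hψσ u)
  have he (u : Fin (n + 1)) : lift K K G ψ (eH u) = if tψ ≤ (u : ℕ) then 1 else 0 := by
    simp only [heH, lift_inv_card_smul_sum_of, hker_le]
  set q : Idx n m → Prop := fun x => tψ ≤ (x.1 : ℕ)
  set S : Matrix (Idx n m) (Idx n m) K := Matrix.of fun uk tj =>
    ∑ c : G ⧸ Subgroup.zpowers (σ ^ p ^ (uk.1 : ℕ)),
      pair (of ℤ_[p] G c.out • P uk) (Pt tj) * ψ c.out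
  set F : Matrix (Idx n m) (Idx n m) K := Matrix.of fun tj si => lift ℤ_[p] K G ψ (Φmat tj si)
  set c : Idx n m → K := fun x => (Fintype.card (Subgroup.zpowers (σ ^ p ^ (x.1 : ℕ))) : K)⁻¹
  set d : Idx n m → K := fun x => ψ (σ ^ p ^ (x.1 : ℕ)) - 1
  have hS (i k : Idx n m) (hi : q i) (hk : ¬ q k) : S i k = 0 :=
    sum_pair_out_smul_mul_eq_zero pair hpair_inv ψ ((hker_le _).2 hi)
      (fun _ hh => of_smul_eq_self_of_mem (fun c => bA ⟨i, c⟩) (hbA i) hh)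
      (of_smul_eq_self_of_mem (fun c => bB ⟨k, c⟩) (hbB k) (Subgroup.mem_zpowers _))
      (mt (hψσ _).1 hk)
  have hd (i : Idx n m) (hi : q i) : d i = 0 := sub_eq_zero.2 ((hψσ _).2 hi)
  have hΛ : (Matrix.of fun uk si => lift K K G ψ (Λmat uk si)) =
      Matrix.of fun i j => c j * ((S * F) i j * if q i then 1 else 0) + Matrix.diagonal d i j := by
    ext i j
    simp only [Matrix.of_apply]
    rw [hΛmat, map_add, map_smul, smul_eq_mul, lift_sum_lift_of_mul_sum_smul_of_mul, he]
    congr 1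
    split_ifs with h <;> simp [h, d]
  have hR : (Matrix.of fun r c : {x : Idx n m // q x} => lift K K G ψ (Rmat r.1 c.1)) =
      (Matrix.diagonal c * S).toSquareBlockProp q := by
    ext i j
    rw [Matrix.of_apply, hRmat, map_smul, lift_sum_smul_of_mul, he, if_pos i.2, mul_one]
    simp [Matrix.toSquareBlockProp_def, Matrix.diagonal_mul, S, c]
  rw [hΛ, Matrix.det_of_mul_ite_add_diagonal q S F c d hS hd, hR]
  congr 1
  exact (Fintype.prod_subtype_sigma_fin m (fun s => ¬ tψ ≤ (s : ℕ))
    fun s => ψ (σ ^ p ^ (s : ℕ)) - 1).trans (by simp only [not_le])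

/-- Let `p` be an odd prime, `G` cyclic of order `p ^ n` with generator
`σ`, `H_t = ⟨σ ^ p ^ t⟩`.  Let `A = ⊕ ℤ_p[G/H_u]·P_{(u,k)}` and `B = ⊕ ℤ_p[G/H_t]·P^t_{(t,j)}`
be `ℤ_p[G]`-modules given as direct sums of free rank-one modules on the indicated
generators, and `⟨·,·⟩ : A × B → ℂ_p` a `ℤ_p`-bilinear `G`-invariant pairing.  Define
matrices over `ℂ_p[G]`:
`R_{(u,k),(t,j)} = |H_u|⁻¹ ∑_{τ ∈ G/H_u} ⟨τP_{(u,k)}, P^t_{(t,j)}⟩ τ e_{H_u}`;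
`Φ = (Φ_{(t,j),(s,i)})` any matrix over `ℤ_p[G]`; and
`Λ_{(u,k),(s,i)} = |H_s|⁻¹ ∑_{(t,j)} Φ_{(t,j),(s,i)} (∑_{τ ∈ G/H_u} ⟨τP_{(u,k)}, P^t_{(t,j)}⟩ τ e_{H_u})
 + [(u,k)=(s,i)]·(σ^{p^s} − 1)`.
Then for every character `ψ` of `G` with `ker ψ = H_{t_ψ}`:
`det ψ(Λ) = det ψ(R_{t_ψ}) · det ψ(Φ_{t_ψ}) · ∏_{s<t_ψ} (ψ(σ^{p^s}) − 1)^{m_s}`.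
(`ℂ_p` is modelled as an algebraically closed field `K` with compatible `ℤ_p`- and
`ℚ_p`-algebra structures; `ψ` is extended linearly to the group algebras.) -/
theorem statement11 (p : ℕ) [Fact p.Prime] (hp2 : p ≠ 2) (n : ℕ)
    (G : Type) [CommGroup G] [Fintype G]
    (σ : G) (hσ : ∀ g : G, g ∈ Subgroup.zpowers σ) (hcard : Fintype.card G = p ^ n)
    (m : Fin (n + 1) → ℕ)
    (K : Type) [Field K] [Algebra ℚ_[p] K] [Algebra ℤ_[p] K]
    [IsScalarTower ℤ_[p] ℚ_[p] K] [IsAlgClosed K]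
    (A : Type) [AddCommGroup A] [Module (MonoidAlgebra ℤ_[p] G) A]
    [Module ℤ_[p] A] [IsScalarTower ℤ_[p] (MonoidAlgebra ℤ_[p] G) A]
    (B : Type) [AddCommGroup B] [Module (MonoidAlgebra ℤ_[p] G) B]
    [Module ℤ_[p] B] [IsScalarTower ℤ_[p] (MonoidAlgebra ℤ_[p] G) B]
    (P : Idx n m → A)
    (bA : Module.Basis (BIdx p n m G σ) ℤ_[p] A)
    (hbA : ∀ (uk : Idx n m) (g : G),
      bA ⟨uk, QuotientGroup.mk g⟩ = MonoidAlgebra.of ℤ_[p] G g • P uk)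
    (Pt : Idx n m → B)
    (bB : Module.Basis (BIdx p n m G σ) ℤ_[p] B)
    (hbB : ∀ (tj : Idx n m) (g : G),
      bB ⟨tj, QuotientGroup.mk g⟩ = MonoidAlgebra.of ℤ_[p] G g • Pt tj)
    (pair : A → B → K)
    (hpair_addl : ∀ (a a' : A) (y : B), pair (a + a') y = pair a y + pair a' y)
    (hpair_addr : ∀ (a : A) (y y' : B), pair a (y + y') = pair a y + pair a y')
    (hpair_smull : ∀ (c : ℤ_[p]) (a : A) (y : B),
      pair (c • a) y = algebraMap ℤ_[p] K c * pair a y)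
    (hpair_smulr : ∀ (c : ℤ_[p]) (a : A) (y : B),
      pair a (c • y) = algebraMap ℤ_[p] K c * pair a y)
    (hpair_inv : ∀ (g : G) (a : A) (y : B),
      pair (MonoidAlgebra.of ℤ_[p] G g • a) (MonoidAlgebra.of ℤ_[p] G g • y) = pair a y)
    (eH : Fin (n + 1) → MonoidAlgebra K G)
    (heH : ∀ u : Fin (n + 1), eH u =
      (Fintype.card ↥(Subgroup.zpowers (σ ^ p ^ (u : ℕ))) : K)⁻¹ •
        ∑ h : ↥(Subgroup.zpowers (σ ^ p ^ (u : ℕ))), MonoidAlgebra.of K G (h : G))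
    (Rmat : Idx n m → Idx n m → MonoidAlgebra K G)
    (hRmat : ∀ uk tj : Idx n m, Rmat uk tj =
      (Fintype.card ↥(Subgroup.zpowers (σ ^ p ^ (uk.1 : ℕ))) : K)⁻¹ •
        ∑ c : G ⧸ Subgroup.zpowers (σ ^ p ^ (uk.1 : ℕ)),
          pair (MonoidAlgebra.of ℤ_[p] G c.out • P uk) (Pt tj) •
            (MonoidAlgebra.of K G c.out * eH uk.1))
    (Φmat : Idx n m → Idx n m → MonoidAlgebra ℤ_[p] G)
    (Λmat : Idx n m → Idx n m → MonoidAlgebra K G)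
    (hΛmat : ∀ uk si : Idx n m, Λmat uk si =
      (Fintype.card ↥(Subgroup.zpowers (σ ^ p ^ (si.1 : ℕ))) : K)⁻¹ •
        (∑ tj : Idx n m,
          MonoidAlgebra.lift ℤ_[p] (MonoidAlgebra K G) G (MonoidAlgebra.of K G) (Φmat tj si) *
            ∑ c : G ⧸ Subgroup.zpowers (σ ^ p ^ (uk.1 : ℕ)),
              pair (MonoidAlgebra.of ℤ_[p] G c.out • P uk) (Pt tj) •
                (MonoidAlgebra.of K G c.out * eH uk.1)) +
        (if uk = si then MonoidAlgebra.of K G (σ ^ p ^ (si.1 : ℕ)) - 1 else 0))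
    (ψ : G →* K) (tψ : ℕ) (htψ : tψ ≤ n)
    (hker : ∀ g : G, ψ g = 1 ↔ g ∈ Subgroup.zpowers (σ ^ p ^ tψ)) :
    Matrix.det (Matrix.of fun uk si : Idx n m =>
        MonoidAlgebra.lift K K G ψ (Λmat uk si)) =
      Matrix.det (Matrix.of fun r c : {x : Idx n m // tψ ≤ (x.1 : ℕ)} =>
          MonoidAlgebra.lift K K G ψ (Rmat r.1 c.1)) *
        Matrix.det (Matrix.of fun r c : {x : Idx n m // tψ ≤ (x.1 : ℕ)} =>
          MonoidAlgebra.lift ℤ_[p] K G ψ (Φmat r.1 c.1)) *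
        ∏ s : Fin (n + 1), if (s : ℕ) < tψ then (ψ (σ ^ p ^ (s : ℕ)) - 1) ^ m s else 1 :=
  statement11_general p n G σ hσ hcard m K A B P bA hbA Pt bB hbB pair hpair_inv eH heH Rmat hRmat
    Φmat Λmat hΛmat ψ tψ htψ hker
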